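/- Let 0 < s < n, 1 < q < n/s, and define p by 1/p = s/n + 1/q. Then for 1 ≤ r ≤ ∞ there is a constant C such that ‖ f(·)/|·|^s ‖_{L^{p,r}(ℝⁿ)} ≤ C ‖f‖_{L^{q,r}(ℝⁿ)} for all f ∈ L^{q,r}(ℝⁿ). -/

import Mathlib

/-!
Rearrangements are submultiplicative up to a shift: if `‖h‖ ≤ ‖f‖ ‖g‖` pointwise, then
`h*(t₁ + t₂) ≤ f*(t₁) g*(t₂)`. The level sets of `g = |x|^{-s}` are balls, so
`g*(t) = (|B₁| / t)^{s/n}`. For `h = f g` and `1/p = s/n + 1/q` this gives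
`t^{1/p - 1/r} h*(t) ≤ C (t/2)^{1/q - 1/r} f*(t/2)`, and the substitution `t ↦ 2t` in the
Lorentz norm only costs a factor `2^{1/r}`.
-/

open MeasureTheory ENNReal Set

/-- Decreasing rearrangement of `‖f‖` with respect to `μ`. -/
noncomputable def rearrangement {α : Type*} [MeasurableSpace α] (μ : Measure α)
    {E : Type*} [NNNorm E] (f : α → E) (t : ℝ) : ℝ≥0∞ :=
  sInf {s : ℝ≥0∞ | μ {x | s < (‖f x‖₊ : ℝ≥0∞)} ≤ ENNReal.ofReal t}

/-- Lorentz quasi-norm `‖f‖_{L^{p,q}(μ)} = ‖ t^{1/p-1/q} f*(t) ‖_{L^q((0,∞),dt)}`. -/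
noncomputable def lorentzNorm {α : Type*} [MeasurableSpace α] (μ : Measure α)
    {E : Type*} [NNNorm E] (p q : ℝ≥0∞) (f : α → E) : ℝ≥0∞ :=
  if q = ∞ then
    ⨆ t ∈ Ioi (0 : ℝ), ENNReal.ofReal (t ^ (p.toReal⁻¹)) * rearrangement μ f t
  else
    (∫⁻ t in Ioi (0 : ℝ),
        (ENNReal.ofReal (t ^ (p.toReal⁻¹ - q.toReal⁻¹)) * rearrangement μ f t) ^ q.toReal) ^
      q.toReal⁻¹

section Rearrangement

variable {α : Type*} [MeasurableSpace α] (μ : Measure α) {E : Type*} [NNNorm E]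

lemma rearrangement_le_of_measure_le (f : α → E) {t : ℝ} {a : ℝ≥0∞}
    (ha : μ {x | a < (‖f x‖₊ : ℝ≥0∞)} ≤ ENNReal.ofReal t) : rearrangement μ f t ≤ a :=
  sInf_le ha

lemma measure_rearrangement_lt_le (f : α → E) (t : ℝ) :
    μ {x | rearrangement μ f t < (‖f x‖₊ : ℝ≥0∞)} ≤ ENNReal.ofReal t := by
  set S := {a : ℝ≥0∞ | μ {x | a < (‖f x‖₊ : ℝ≥0∞)} ≤ ENNReal.ofReal t}
  obtain ⟨u, hu_anti, hu_lim, hu_mem⟩ :=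
    exists_seq_tendsto_sInf (⟨∞, by simp [S]⟩ : S.Nonempty) (OrderBot.bddBelow S)
  have hsub : {x | sInf S < (‖f x‖₊ : ℝ≥0∞)} ⊆ ⋃ k, {x | u k < (‖f x‖₊ : ℝ≥0∞)} :=
    fun x hx => mem_iUnion.2 (hu_lim.eventually_lt_const hx).exists
  have hmono : Monotone fun k => {x | u k < (‖f x‖₊ : ℝ≥0∞)} :=
    fun i j hij _ hx => (hu_anti hij).trans_lt hx
  calc μ {x | rearrangement μ f t < (‖f x‖₊ : ℝ≥0∞)}
      ≤ μ (⋃ k, {x | u k < (‖f x‖₊ : ℝ≥0∞)}) := measure_mono hsub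
    _ = ⨆ k, μ {x | u k < (‖f x‖₊ : ℝ≥0∞)} := hmono.measure_iUnion
    _ ≤ ENNReal.ofReal t := iSup_le hu_mem

lemma rearrangement_antitone (f : α → E) : Antitone (rearrangement μ f) :=
  fun _ _ h => sInf_le_sInf fun _ ha => ha.trans (ENNReal.ofReal_le_ofReal h)

lemma rearrangement_add_le_mul {F G : Type*} [NNNorm F] [NNNorm G] {h : α → E} {f : α → F}
    {g : α → G} (hfg : ∀ x, ‖h x‖₊ ≤ ‖f x‖₊ * ‖g x‖₊) {t₁ t₂ : ℝ} (ht₁ : 0 ≤ t₁) (ht₂ : 0 ≤ t₂) :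
    rearrangement μ h (t₁ + t₂) ≤ rearrangement μ f t₁ * rearrangement μ g t₂ := by
  apply rearrangement_le_of_measure_le
  have hsub : {x | rearrangement μ f t₁ * rearrangement μ g t₂ < (‖h x‖₊ : ℝ≥0∞)} ⊆
      {x | rearrangement μ f t₁ < (‖f x‖₊ : ℝ≥0∞)} ∪
        {x | rearrangement μ g t₂ < (‖g x‖₊ : ℝ≥0∞)} := by
    intro x hx
    by_contra hc
    simp only [mem_union, mem_ofPred_eq, not_or, not_lt] at hc hx
    refine hx.not_ge ((ENNReal.coe_le_coe.2 (hfg x)).trans ?_)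
    rw [ENNReal.coe_mul]
    exact mul_le_mul' hc.1 hc.2
  calc μ _ ≤ μ _ := measure_mono hsub
    _ ≤ _ := measure_union_le _ _
    _ ≤ ENNReal.ofReal t₁ + ENNReal.ofReal t₂ :=
      add_le_add (measure_rearrangement_lt_le μ f t₁) (measure_rearrangement_lt_le μ g t₂)
    _ = ENNReal.ofReal (t₁ + t₂) := (ENNReal.ofReal_add ht₁ ht₂).symm

end Rearrangement

lemma rpow_add_mul_div_two_rpow_neg {t : ℝ} (ht : 0 < t) (a b : ℝ) :
    t ^ (a + b) * (t / 2) ^ (-a) = 2 ^ (a + b) * (t / 2) ^ b := by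
  have ht2 : 0 < t / 2 := half_pos ht
  have hsplit : t ^ (a + b) = 2 ^ (a + b) * (t / 2) ^ (a + b) := by
    rw [← Real.mul_rpow zero_le_two ht2.le, mul_div_cancel₀ t two_ne_zero]
  rw [hsplit, mul_assoc, ← Real.rpow_add ht2]
  ring_nf

section HaarMeasure

open Module Metric

variable {E : Type*} [NormedAddCommGroup E] [NormedSpace ℝ E] [FiniteDimensional ℝ E]
  [MeasurableSpace E] [BorelSpace E] (μ : Measure E) [μ.IsAddHaarMeasure]

lemma rearrangement_norm_rpow_neg_le (hd : 0 < finrank ℝ E) {s : ℝ} (hs : 0 < s) {t : ℝ}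
    (ht : 0 < t) :
    rearrangement μ (fun x : E => ‖x‖ ^ (-s)) t ≤
      ENNReal.ofReal ((μ (ball 0 1)).toReal ^ (s / finrank ℝ E) * t ^ (-(s / finrank ℝ E))) := by
  set d : ℝ := (finrank ℝ E : ℝ)
  have hd_pos : (0 : ℝ) < d := Nat.cast_pos.2 hd
  set V := (μ (ball (0 : E) 1)).toReal
  have hV : 0 < V := ENNReal.toReal_pos (measure_ball_pos μ 0 one_pos).ne' measure_ball_lt_top.ne
  -- the radius of the ball of measure `t`
  set R : ℝ := (t / V) ^ d⁻¹
  have hR : 0 < R := by positivity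
  have hR_pow : R ^ finrank ℝ E = t / V := by
    rw [← Real.rpow_natCast, ← Real.rpow_mul (by positivity), inv_mul_cancel₀ hd_pos.ne',
      Real.rpow_one]
  have hR_rpow : R ^ (-s) = V ^ (s / d) * t ^ (-(s / d)) := by
    rw [← Real.rpow_mul (by positivity), show d⁻¹ * -s = -(s / d) by ring,
      Real.div_rpow ht.le hV.le, Real.rpow_neg hV.le, div_inv_eq_mul, mul_comm]
  rw [← hR_rpow]
  apply rearrangement_le_of_measure_le
  have hsub : {x : E | ENNReal.ofReal (R ^ (-s)) < (‖‖x‖ ^ (-s)‖₊ : ℝ≥0∞)} ⊆ ball 0 R := by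
    intro x hx
    rw [mem_ball_zero_iff]
    rcases (norm_nonneg x).eq_or_lt with hx0 | hx0
    · rwa [← hx0]
    have : R ^ (-s) < ‖x‖ ^ (-s) := by
      rwa [mem_ofPred_eq, ← enorm_eq_nnnorm, Real.enorm_eq_ofReal (by positivity),
        ENNReal.ofReal_lt_ofReal_iff (by positivity)] at hx
    exact (Real.rpow_lt_rpow_iff_of_neg hR hx0 (neg_lt_zero.2 hs)).1 this
  calc μ _ ≤ μ (ball 0 R) := measure_mono hsub
    _ = ENNReal.ofReal t := by
      rw [μ.addHaar_ball_of_pos 0 hR, hR_pow, ENNReal.ofReal_div_of_pos hV,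
        ENNReal.ofReal_toReal measure_ball_lt_top.ne,
        ENNReal.div_mul_cancel (measure_ball_pos μ 0 one_pos).ne' measure_ball_lt_top.ne]

lemma rearrangement_div_rpow_le {𝕜 : Type*} [RCLike 𝕜] (hd : 0 < finrank ℝ E) {s : ℝ}
    (hs : 0 < s) (f : E → 𝕜) {t : ℝ} (ht : 0 < t) :
    rearrangement μ (fun x => f x / ((‖x‖ ^ s : ℝ) : 𝕜)) t ≤
      rearrangement μ f (t / 2) * ENNReal.ofReal
        ((μ (ball 0 1)).toReal ^ (s / finrank ℝ E) * (t / 2) ^ (-(s / finrank ℝ E))) := by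
  have hfg (x : E) : ‖f x / ((‖x‖ ^ s : ℝ) : 𝕜)‖₊ ≤ ‖f x‖₊ * ‖‖x‖ ^ (-s)‖₊ := by
    rw [← NNReal.coe_le_coe]
    simp [Real.rpow_neg, div_eq_mul_inv]
  have hprod := rearrangement_add_le_mul μ hfg (half_pos ht).le (half_pos ht).le
  rw [add_halves] at hprod
  exact hprod.trans (by gcongr; exact rearrangement_norm_rpow_neg_le μ hd hs (half_pos ht))

lemma rpow_add_mul_rearrangement_div_rpow_le {𝕜 : Type*} [RCLike 𝕜] (hd : 0 < finrank ℝ E)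
    {s : ℝ} (hs : 0 < s) (f : E → 𝕜) (γ : ℝ) {t : ℝ} (ht : 0 < t) :
    ENNReal.ofReal (t ^ (s / finrank ℝ E + γ)) *
        rearrangement μ (fun x => f x / ((‖x‖ ^ s : ℝ) : 𝕜)) t ≤
      ENNReal.ofReal (2 ^ (s / finrank ℝ E + γ) * (μ (ball 0 1)).toReal ^ (s / finrank ℝ E)) *
        (ENNReal.ofReal ((t / 2) ^ γ) * rearrangement μ f (t / 2)) := by
  set σ := s / (finrank ℝ E : ℝ)
  set V := (μ (ball (0 : E) 1)).toReal
  have hpow : t ^ (σ + γ) * (V ^ σ * (t / 2) ^ (-σ)) = 2 ^ (σ + γ) * V ^ σ * (t / 2) ^ γ := by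
    rw [mul_left_comm, rpow_add_mul_div_two_rpow_neg ht]
    ring
  calc ENNReal.ofReal (t ^ (σ + γ)) * rearrangement μ (fun x => f x / ((‖x‖ ^ s : ℝ) : 𝕜)) t
      ≤ ENNReal.ofReal (t ^ (σ + γ)) *
        (rearrangement μ f (t / 2) * ENNReal.ofReal (V ^ σ * (t / 2) ^ (-σ))) := by
        gcongr
        exact rearrangement_div_rpow_le μ hd hs f ht
    _ = ENNReal.ofReal (t ^ (σ + γ) * (V ^ σ * (t / 2) ^ (-σ))) * rearrangement μ f (t / 2) := by
        rw [ENNReal.ofReal_mul (p := t ^ (σ + γ)) (by positivity)]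
        ring
    _ = ENNReal.ofReal (2 ^ (σ + γ) * V ^ σ) *
        (ENNReal.ofReal ((t / 2) ^ γ) * rearrangement μ f (t / 2)) := by
        rw [hpow, ENNReal.ofReal_mul (p := 2 ^ (σ + γ) * V ^ σ) (by positivity)]
        ring

end HaarMeasure

lemma lintegral_Ioi_comp_div (G : ℝ → ℝ≥0∞) {c : ℝ} (hc : 0 < c) :
    ∫⁻ t in Ioi 0, G (t / c) = ENNReal.ofReal c * ∫⁻ t in Ioi 0, G t := by
  have hemb : MeasurableEmbedding (c * ·) :=
    (Homeomorph.mulLeft₀ c hc.ne').measurableEmbedding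
  have hmap : (volume.restrict (Ioi (0 : ℝ))).map (c * ·) =
      ENNReal.ofReal c⁻¹ • volume.restrict (Ioi 0) := by
    have hpre : (c * ·) ⁻¹' Ioi 0 = Ioi (0 : ℝ) := by
      ext x
      simp [mul_pos_iff_of_pos_left hc]
    rw [← hpre, ← hemb.restrict_map, Real.map_volume_mul_left hc.ne', hpre,
      Measure.restrict_smul, abs_of_pos (inv_pos.2 hc)]
  have h := hemb.lintegral_map (μ := volume.restrict (Ioi 0)) fun t => G (t / c)
  simp only [hmap, lintegral_smul_measure, smul_eq_mul, mul_div_cancel_left₀ _ hc.ne'] at h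
  rw [← h, ← mul_assoc, ← ENNReal.ofReal_mul hc.le, mul_inv_cancel₀ hc.ne', ENNReal.ofReal_one,
    one_mul]

lemma lintegral_Ioi_rpow_le_of_le_comp_div {F G : ℝ → ℝ≥0∞} (hG : Measurable G) {c ρ : ℝ}
    (hc : 0 < c) (hρ : 0 < ρ) {C : ℝ≥0∞} (hFG : ∀ t > 0, F t ≤ C * G (t / c)) :
    (∫⁻ t in Ioi 0, F t ^ ρ) ^ ρ⁻¹ ≤
      C * ENNReal.ofReal c ^ ρ⁻¹ * (∫⁻ t in Ioi 0, G t ^ ρ) ^ ρ⁻¹ := by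
  calc (∫⁻ t in Ioi 0, F t ^ ρ) ^ ρ⁻¹
      ≤ (∫⁻ t in Ioi 0, C ^ ρ * G (t / c) ^ ρ) ^ ρ⁻¹ := by
        refine ENNReal.rpow_le_rpow (setLIntegral_mono' measurableSet_Ioi fun t ht => ?_)
          (inv_nonneg.2 hρ.le)
        rw [← ENNReal.mul_rpow_of_nonneg _ _ hρ.le]
        exact ENNReal.rpow_le_rpow (hFG t ht) hρ.le
    _ = (C ^ ρ * (ENNReal.ofReal c * ∫⁻ t in Ioi 0, G t ^ ρ)) ^ ρ⁻¹ := by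
        rw [lintegral_const_mul _ (by fun_prop : Measurable fun t => G (t / c) ^ ρ),
          lintegral_Ioi_comp_div (fun t => G t ^ ρ) hc]
    _ = C * ENNReal.ofReal c ^ ρ⁻¹ * (∫⁻ t in Ioi 0, G t ^ ρ) ^ ρ⁻¹ := by
        rw [ENNReal.mul_rpow_of_nonneg _ _ (inv_nonneg.2 hρ.le),
          ENNReal.mul_rpow_of_nonneg _ _ (inv_nonneg.2 hρ.le), ← ENNReal.rpow_mul,
          mul_inv_cancel₀ hρ.ne', ENNReal.rpow_one, mul_assoc]

lemma lorentzNorm_le_of_le_comp_div {α β E F : Type*} [MeasurableSpace α] [MeasurableSpace β]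
    [NNNorm E] [NNNorm F] (μ : Measure α) (ν : Measure β) {h : α → E} {f : β → F}
    {p₁ p₂ r : ℝ≥0∞} (hr : r ≠ 0) {c : ℝ} (hc : 0 < c) {C : ℝ≥0∞}
    (hhf : ∀ t > 0, ENNReal.ofReal (t ^ (p₁.toReal⁻¹ - r.toReal⁻¹)) * rearrangement μ h t ≤
      C * (ENNReal.ofReal ((t / c) ^ (p₂.toReal⁻¹ - r.toReal⁻¹)) * rearrangement ν f (t / c))) :
    lorentzNorm μ p₁ r h ≤ C * ENNReal.ofReal c ^ r.toReal⁻¹ * lorentzNorm ν p₂ r f := by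
  rcases eq_or_ne r ∞ with rfl | hr_top
  · simp only [toReal_top, _root_.inv_zero, sub_zero] at hhf
    simp only [lorentzNorm, if_true, toReal_top, _root_.inv_zero, rpow_zero, mul_one]
    refine iSup₂_le fun t ht => (hhf t ht).trans ?_
    gcongr
    exact le_iSup₂ (f := fun u (_ : u ∈ Ioi 0) =>
      ENNReal.ofReal (u ^ p₂.toReal⁻¹) * rearrangement ν f u) (t / c) (div_pos ht hc)
  · simp only [lorentzNorm, if_neg hr_top]
    exact lintegral_Ioi_rpow_le_of_le_comp_div
      ((measurable_id.pow_const _).ennreal_ofReal.mul (rearrangement_antitone ν f).measurable)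
      hc (toReal_pos hr hr_top) hhf

theorem lorentz_div_rpow_general (n : ℕ) (s q p : ℝ) (hs : 0 < s) (hsn : s < n)
    (hq : 1 < q) (hp : 1 / p = s / n + 1 / q) (r : ℝ≥0∞) (hr : 1 ≤ r) :
    ∃ C : ℝ≥0∞, C < ∞ ∧ ∀ f : EuclideanSpace ℝ (Fin n) → ℂ,
      AEStronglyMeasurable f volume →
      lorentzNorm volume (ENNReal.ofReal p) r (fun x => f x / ((‖x‖ ^ s : ℝ) : ℂ)) ≤
        C * lorentzNorm volume (ENNReal.ofReal q) r f := by
  have hn : 0 < Module.finrank ℝ (EuclideanSpace ℝ (Fin n)) := by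
    rw [finrank_euclideanSpace_fin]
    exact_mod_cast hs.trans hsn
  set γ := q⁻¹ - r.toReal⁻¹
  have hp_exp : (ENNReal.ofReal p).toReal⁻¹ - r.toReal⁻¹ = s / n + γ := by
    have hp_pos : 0 < p := one_div_pos.1 (hp ▸ by positivity)
    rw [toReal_ofReal hp_pos.le, ← one_div, hp, one_div]
    ring
  have hq_exp : (ENNReal.ofReal q).toReal⁻¹ - r.toReal⁻¹ = γ := by
    rw [toReal_ofReal (by linarith)]
  set V := (volume (Metric.ball (0 : EuclideanSpace ℝ (Fin n)) 1)).toReal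
  refine ⟨ENNReal.ofReal (2 ^ (s / n + γ) * V ^ (s / n)) * ENNReal.ofReal 2 ^ r.toReal⁻¹, ?_,
    fun f _ => lorentzNorm_le_of_le_comp_div _ _ (one_pos.trans_le hr).ne' two_pos
      fun t ht => ?_⟩
  · exact mul_lt_top ofReal_lt_top (rpow_lt_top_of_nonneg (by positivity) ofReal_ne_top)
  rw [hp_exp, hq_exp]
  have hweighted := rpow_add_mul_rearrangement_div_rpow_le volume hn hs f γ ht
  rwa [finrank_euclideanSpace_fin] at hweighted

/-- Hölder step of the Sobolev–Hardy–Littlewood inequality: for `0 < s < n`,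
`1 < q < n/s`, `1/p = s/n + 1/q` and `1 ≤ r ≤ ∞`,
`‖ f/|x|^s ‖_{L^{p,r}(ℝⁿ)} ≤ C ‖f‖_{L^{q,r}(ℝⁿ)}`. -/
theorem lorentz_div_rpow (n : ℕ) (s q p : ℝ) (hs : 0 < s) (hsn : s < n)
    (hq : 1 < q) (hq' : q < n / s) (hp : 1 / p = s / n + 1 / q) (r : ℝ≥0∞) (hr : 1 ≤ r) :
    ∃ C : ℝ≥0∞, C < ∞ ∧ ∀ f : EuclideanSpace ℝ (Fin n) → ℂ,
      AEStronglyMeasurable f volume →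
      lorentzNorm volume (ENNReal.ofReal p) r (fun x => f x / ((‖x‖ ^ s : ℝ) : ℂ)) ≤
        C * lorentzNorm volume (ENNReal.ofReal q) r f :=
  lorentz_div_rpow_general n s q p hs hsn hq hp r hr
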